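/- The point F₁(α(t)) lies on the ray from the origin through F₀(t); that is, F₁(α(t)) is a nonnegative scalar multiple of F₀(t), for t ≥ 2π. -/

import Mathlib

open Real

/-- The polar square root spiral `F₁(t) = √(t/(2π))(cos t, sin t)`. -/
noncomputable def F1 (t : ℝ) : EuclideanSpace ℝ (Fin 2) :=
  WithLp.toLp 2 ![Real.sqrt (t / (2 * π)) * Real.cos t, Real.sqrt (t / (2 * π)) * Real.sin t]

/-- The front track `F₀(t) = F₁(t) + F₁'(t)/‖F₁'(t)‖`. -/
noncomputable def F0 (t : ℝ) : EuclideanSpace ℝ (Fin 2) :=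
  F1 t + ‖deriv F1 t‖⁻¹ • deriv F1 t

/-- `α(t) = t + 2π + arctan(2t/(1 + √(t/(2π))·√(1+4t²)))`. -/
noncomputable def α (t : ℝ) : ℝ :=
  t + 2 * π + Real.arctan (2 * t / (1 + Real.sqrt (t / (2 * π)) * Real.sqrt (1 + 4 * t ^ 2)))

lemma hasDerivAt_F1 (t : ℝ) (ht : 0 < t) :
    HasDerivAt F1
      (WithLp.toLp 2 ![(1 / (2 * Real.sqrt (t / (2 * π))) * (2 * π)⁻¹) * Real.cos t
          - Real.sqrt (t / (2 * π)) * Real.sin t,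
        (1 / (2 * Real.sqrt (t / (2 * π))) * (2 * π)⁻¹) * Real.sin t
          + Real.sqrt (t / (2 * π)) * Real.cos t]) t := by
  have hu : (t / (2 * π)) ≠ 0 := by positivity
  have hr : HasDerivAt (fun s : ℝ => Real.sqrt (s / (2 * π)))
      (1 / (2 * Real.sqrt (t / (2 * π))) * (2 * π)⁻¹) t := by
    have := (Real.hasDerivAt_sqrt hu).comp t ((hasDerivAt_id t).div_const (2 * π))
    exact this.congr_deriv (by ring)
  have h0 : HasDerivAt (fun s : ℝ => Real.sqrt (s / (2 * π)) * Real.cos s)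
      ((1 / (2 * Real.sqrt (t / (2 * π))) * (2 * π)⁻¹) * Real.cos t
        - Real.sqrt (t / (2 * π)) * Real.sin t) t := by
    exact (hr.mul (Real.hasDerivAt_cos t)).congr_deriv (by ring)
  have h1 : HasDerivAt (fun s : ℝ => Real.sqrt (s / (2 * π)) * Real.sin s)
      ((1 / (2 * Real.sqrt (t / (2 * π))) * (2 * π)⁻¹) * Real.sin t
        + Real.sqrt (t / (2 * π)) * Real.cos t) t := by
    exact (hr.mul (Real.hasDerivAt_sin t)).congr_deriv (by ring)
  have hpi : HasDerivAt (fun s : ℝ => (![Real.sqrt (s / (2 * π)) * Real.cos s,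
      Real.sqrt (s / (2 * π)) * Real.sin s] : Fin 2 → ℝ))
      (![(1 / (2 * Real.sqrt (t / (2 * π))) * (2 * π)⁻¹) * Real.cos t
          - Real.sqrt (t / (2 * π)) * Real.sin t,
        (1 / (2 * Real.sqrt (t / (2 * π))) * (2 * π)⁻¹) * Real.sin t
          + Real.sqrt (t / (2 * π)) * Real.cos t]) t := by
    rw [hasDerivAt_pi]
    intro i
    fin_cases i
    · exact h0
    · exact h1
  exact ((PiLp.continuousLinearEquiv 2 ℝ (fun _ : Fin 2 => ℝ)).symm.toContinuousLinearMap.hasFDerivAt.comp_hasDerivAt t hpi)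

/-- `F₁(α(t))` lies on the ray from the origin through `F₀(t)`: it is a nonnegative
scalar multiple of `F₀(t)`, for `t ≥ 2π`. -/
theorem F1_alpha_on_ray (t : ℝ) (ht : 2 * π ≤ t) :
    ∃ c : ℝ, 0 ≤ c ∧ F1 (α t) = c • F0 t := by
  have hπ : 0 < π := Real.pi_pos
  have ht0 : 0 < t := lt_of_lt_of_le (by positivity) ht
  set r : ℝ := Real.sqrt (t / (2 * π)) with hr_def
  clear_value r
  set d : ℝ := 1 / (2 * r) * (2 * π)⁻¹ with hd_def
  clear_value d
  have hrpos : 0 < r := by rw [hr_def]; positivity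
  have hr2 : r ^ 2 = t / (2 * π) := by rw [hr_def]; exact Real.sq_sqrt (by positivity)
  have hdpos : 0 < d := by
    rw [hd_def]
    exact mul_pos (div_pos one_pos (by linarith)) (inv_pos.2 (by positivity))
  have hrd : r * d = 1 / (4 * π) := by rw [hd_def]; field_simp; ring
  set N : ℝ := Real.sqrt (d ^ 2 + r ^ 2) with hN_def
  clear_value N
  have hNpos : 0 < N := by rw [hN_def]; exact Real.sqrt_pos.2 (by positivity)
  have hN2 : N ^ 2 = d ^ 2 + r ^ 2 := by rw [hN_def]; exact Real.sq_sqrt (by positivity)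
  -- derivative and norm
  have hD : deriv F1 t = WithLp.toLp 2 ![d * Real.cos t - r * Real.sin t, d * Real.sin t + r * Real.cos t] := by
    rw [hd_def, hr_def]
    exact (hasDerivAt_F1 t ht0).deriv
  have hN : ‖deriv F1 t‖ = N := by
    rw [hD, EuclideanSpace.norm_eq]
    simp only [Fin.sum_univ_two, Matrix.cons_val_zero, Matrix.cons_val_one, Matrix.head_cons,
      Real.norm_eq_abs, sq_abs, PiLp.toLp_apply]
    rw [hN_def]
    congr 1
    nlinarith [Real.sin_sq_add_cos_sq t]
  -- key square-root identities
  have h2t : 2 * t = 4 * π * r ^ 2 := by rw [hr2]; field_simp; ring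
  have hs : Real.sqrt (1 + 4 * t ^ 2) = 4 * π * (r * N) := by
    have h : 1 + 4 * t ^ 2 = (4 * π * (r * N)) ^ 2 := by
      have e1 : (4 * π * (r * N)) ^ 2 = 16 * π ^ 2 * (r ^ 2 * N ^ 2) := by ring
      rw [e1, hN2]
      have e2 : 16 * π ^ 2 * (r ^ 2 * (d ^ 2 + r ^ 2))
          = 16 * π ^ 2 * ((r * d) ^ 2 + (r ^ 2) ^ 2) := by ring
      rw [e2, hrd, hr2]
      field_simp
      ring
    rw [h, Real.sqrt_sq (by positivity)]
  -- A, B, M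
  set A : ℝ := r + d / N with hA_def
  clear_value A
  set B : ℝ := r / N with hB_def
  clear_value B
  have hApos : 0 < A := by rw [hA_def]; positivity
  have hBpos : 0 < B := by rw [hB_def]; positivity
  set M : ℝ := Real.sqrt (A ^ 2 + B ^ 2) with hM_def
  clear_value M
  have hMpos : 0 < M := by rw [hM_def]; exact Real.sqrt_pos.2 (by positivity)
  have hM2 : M ^ 2 = A ^ 2 + B ^ 2 := by rw [hM_def]; exact Real.sq_sqrt (by positivity)
  have hA0 : A ≠ 0 := ne_of_gt hApos
  have hM0 : M ≠ 0 := ne_of_gt hMpos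
  have hN0 : N ≠ 0 := ne_of_gt hNpos
  set x : ℝ := 2 * t / (1 + r * Real.sqrt (1 + 4 * t ^ 2)) with hx_def
  clear_value x
  have hxBA : x = B / A := by
    have e1 : B / A = r / (r * N + d) := by
      rw [hB_def, hA_def, div_eq_div_iff (by positivity) (by positivity)]
      field_simp
    have e2 : x = r / (r * N + d) := by
      rw [hx_def, hs, div_eq_div_iff (by positivity) (by positivity)]
      have hrd' : 4 * π * (r * d) = 1 := by rw [hrd]; field_simp
      linear_combination (r * N + d) * h2t + r * hrd'
    rw [e1, e2]
  have h1x : 1 + x ^ 2 = (M / A) ^ 2 := by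
    rw [hxBA]
    field_simp
    linarith [hM2]
  have hsx : Real.sqrt (1 + x ^ 2) = M / A := by
    rw [h1x, Real.sqrt_sq (by positivity)]
  have hcos : Real.cos (Real.arctan x) = A / M := by
    rw [Real.cos_arctan, hsx, one_div_div]
  have hsin : Real.sin (Real.arctan x) = B / M := by
    rw [Real.sin_arctan, hsx, hxBA]
    field_simp
  have hα : α t = (t + Real.arctan x) + 2 * π := by
    rw [hx_def, hr_def, α]; ring
  have hcosα : M * Real.cos (α t) = A * Real.cos t - B * Real.sin t := by
    rw [hα, Real.cos_add_two_pi, Real.cos_add, hcos, hsin]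
    field_simp
  have hsinα : M * Real.sin (α t) = A * Real.sin t + B * Real.cos t := by
    rw [hα, Real.sin_add_two_pi, Real.sin_add, hcos, hsin]
    field_simp
  have hF0 : F0 t = WithLp.toLp 2 ![A * Real.cos t - B * Real.sin t, A * Real.sin t + B * Real.cos t] := by
    rw [F0, hN, hD]
    ext i
    fin_cases i
    · simp only [F1, PiLp.add_apply, PiLp.smul_apply, smul_eq_mul,
        Matrix.cons_val_zero, PiLp.toLp_apply, Fin.zero_eta]
      rw [hA_def, hB_def, ← hr_def]
      field_simp
      ring
    · simp only [F1, PiLp.add_apply, PiLp.smul_apply, smul_eq_mul,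
        Matrix.cons_val_one, Matrix.head_cons, PiLp.toLp_apply, Fin.mk_one, Matrix.cons_val_zero]
      rw [hA_def, hB_def, ← hr_def]
      field_simp
      ring
  refine ⟨Real.sqrt (α t / (2 * π)) / M, by positivity, ?_⟩
  rw [hF0]
  ext i
  fin_cases i
  · simp only [F1, PiLp.smul_apply, smul_eq_mul, Matrix.cons_val_zero, PiLp.toLp_apply, Fin.zero_eta]
    rw [← hcosα]
    field_simp
  · simp only [F1, PiLp.smul_apply, smul_eq_mul, Matrix.cons_val_one, Matrix.head_cons, PiLp.toLp_apply, Fin.mk_one, Matrix.cons_val_zero]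
    rw [← hsinα]
    field_simp
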